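/- For the two-qubit ansatz ψ(θ₀,θ₁,θ₂) with coefficients (cos θ₀ cos θ₁, cos θ₀ cos θ₂ sin θ₁ − cos θ₁ sin θ₀ sin θ₂, sin θ₀ sin θ₁, cos θ₁ cos θ₂ sin θ₀ + cos θ₀ sin θ₁ sin θ₂), the Fubini–Study metric equals the 3×3 matrix with diagonal entries (1, 1, (1 − cos 2θ₀ cos 2θ₁)/2) and off-diagonal entries g₀₂ = g₂₀ = cos θ₁ sin θ₁, g₁₂ = g₂₁ = −cos θ₀ sin θ₀, g₀₁ = g₁₀ = 0. -/

import Mathlib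

/-- The two-qubit ansatz state, a real unit vector in ℝ⁴ ⊂ ℂ⁴. -/
noncomputable def psi14 (θ : Fin 3 → ℝ) : Fin 4 → ℝ :=
  ![Real.cos (θ 0) * Real.cos (θ 1),
    Real.cos (θ 0) * Real.cos (θ 2) * Real.sin (θ 1)
      - Real.cos (θ 1) * Real.sin (θ 0) * Real.sin (θ 2),
    Real.sin (θ 0) * Real.sin (θ 1),
    Real.cos (θ 1) * Real.cos (θ 2) * Real.sin (θ 0)
      + Real.cos (θ 0) * Real.sin (θ 1) * Real.sin (θ 2)]

/-- Partial derivative `∂_i ψ`. -/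
noncomputable def dpsi14 (i : Fin 3) (θ : Fin 3 → ℝ) : Fin 4 → ℝ :=
  fderiv ℝ psi14 θ (Pi.single i 1)

/-- Fubini–Study metric of the real ansatz:
`g_{ij} = ⟨∂_i ψ, ∂_j ψ⟩ − ⟨∂_i ψ, ψ⟩⟨ψ, ∂_j ψ⟩`. -/
noncomputable def fsMetric14 (i j : Fin 3) (θ : Fin 3 → ℝ) : ℝ :=
  (∑ m, dpsi14 i θ m * dpsi14 j θ m)
    - (∑ m, dpsi14 i θ m * psi14 θ m) * (∑ m, psi14 θ m * dpsi14 j θ m)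

open Real Function

/-! Since `ψ(θ)` is a unit vector for every `θ`, each partial derivative `∂ᵢψ` is orthogonal to `ψ`
(differentiate `⟨ψ, ψ⟩ = 1`), so the correction term of the Fubini–Study metric vanishes and
`g_ij = ⟨∂ᵢψ, ∂ⱼψ⟩`. The entries then follow from the explicit partial derivatives and
`sin² + cos² = 1`. -/

theorem HasDerivAt.sum_mul_eq_zero_of_sum_mul_self_const {ι : Type*} [Fintype ι]
    {f : ℝ → ι → ℝ} {f' : ι → ℝ} {t c : ℝ} (hf : HasDerivAt f f' t)
    (hc : ∀ s, ∑ m, f s m * f s m = c) : ∑ m, f' m * f t m = 0 := by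
  have hsum := HasDerivAt.fun_sum (u := Finset.univ) fun m _ ↦
    (hasDerivAt_pi.1 hf m).fun_mul (hasDerivAt_pi.1 hf m)
  have hconst : HasDerivAt (fun s ↦ ∑ m, f s m * f s m) 0 t := by
    simpa only [hc] using hasDerivAt_const t c
  have h := hsum.unique hconst
  simp only [mul_comm (f t _), ← two_mul, ← Finset.mul_sum] at h
  linarith

theorem differentiable_psi14 : Differentiable ℝ psi14 := by
  refine differentiable_pi.2 fun m ↦ ?_
  fin_cases m <;>
    simp only [psi14, Fin.zero_eta, Fin.mk_one, Fin.reduceFinMk, Matrix.cons_val_zero,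
      Matrix.cons_val_one, Matrix.cons_val] <;>
    fun_prop

theorem hasDerivAt_psi14_update (θ : Fin 3 → ℝ) (i : Fin 3) :
    HasDerivAt (fun t ↦ psi14 (update θ i t)) (dpsi14 i θ) (θ i) := by
  have h := (differentiable_psi14 _).hasFDerivAt.comp_hasDerivAt (θ i)
    (hasDerivAt_update θ i (θ i))
  rwa [update_eq_self] at h

theorem dpsi14_apply (i : Fin 3) (θ : Fin 3 → ℝ) (m : Fin 4) :
    dpsi14 i θ m = deriv (fun t ↦ psi14 (update θ i t) m) (θ i) :=
  (hasDerivAt_pi.1 (hasDerivAt_psi14_update θ i) m).deriv.symm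

theorem dpsi14_zero (θ : Fin 3 → ℝ) : dpsi14 0 θ =
    ![-(sin (θ 0) * cos (θ 1)),
      -(sin (θ 0) * sin (θ 1) * cos (θ 2)) - cos (θ 0) * cos (θ 1) * sin (θ 2),
      cos (θ 0) * sin (θ 1),
      cos (θ 0) * cos (θ 1) * cos (θ 2) - sin (θ 0) * sin (θ 1) * sin (θ 2)] := by
  ext m
  fin_cases m <;>
    simp (disch := fun_prop) [dpsi14_apply, psi14, update_apply, -mul_eq_mul_right_iff] <;> ring

theorem dpsi14_one (θ : Fin 3 → ℝ) : dpsi14 1 θ =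
    ![-(cos (θ 0) * sin (θ 1)),
      cos (θ 0) * cos (θ 1) * cos (θ 2) + sin (θ 0) * sin (θ 1) * sin (θ 2),
      sin (θ 0) * cos (θ 1),
      cos (θ 0) * cos (θ 1) * sin (θ 2) - sin (θ 0) * sin (θ 1) * cos (θ 2)] := by
  ext m
  fin_cases m <;>
    simp (disch := fun_prop) [dpsi14_apply, psi14, update_apply, -mul_eq_mul_right_iff] <;> ring

theorem dpsi14_two (θ : Fin 3 → ℝ) : dpsi14 2 θ =
    ![0,
      -(cos (θ 0) * sin (θ 1) * sin (θ 2)) - sin (θ 0) * cos (θ 1) * cos (θ 2),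
      0,
      cos (θ 0) * sin (θ 1) * cos (θ 2) - sin (θ 0) * cos (θ 1) * sin (θ 2)] := by
  ext m
  fin_cases m <;>
    simp (disch := fun_prop) [dpsi14_apply, psi14, update_apply, -mul_eq_mul_right_iff] <;> ring

theorem sum_psi14_mul_self (θ : Fin 3 → ℝ) : ∑ m, psi14 θ m * psi14 θ m = 1 := by
  have p0 := sin_sq_add_cos_sq (θ 0)
  have p1 := sin_sq_add_cos_sq (θ 1)
  have p2 := sin_sq_add_cos_sq (θ 2)
  simp only [psi14, Fin.sum_univ_four, Matrix.cons_val_zero, Matrix.cons_val_one, Matrix.cons_val]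
  grind

theorem sum_dpsi14_mul_psi14 (i : Fin 3) (θ : Fin 3 → ℝ) :
    ∑ m, dpsi14 i θ m * psi14 θ m = 0 := by
  simpa using (hasDerivAt_psi14_update θ i).sum_mul_eq_zero_of_sum_mul_self_const
    fun t ↦ sum_psi14_mul_self (update θ i t)

theorem fsMetric14_eq_sum (i j : Fin 3) (θ : Fin 3 → ℝ) :
    fsMetric14 i j θ = ∑ m, dpsi14 i θ m * dpsi14 j θ m := by
  simp [fsMetric14, sum_dpsi14_mul_psi14]

theorem fsMetric14_comm (i j : Fin 3) (θ : Fin 3 → ℝ) : fsMetric14 i j θ = fsMetric14 j i θ := by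
  simp only [fsMetric14_eq_sum, mul_comm (dpsi14 i θ _)]

/-- The Fubini–Study metric of the two-qubit ansatz equals the 3×3 matrix with
diagonal `(1, 1, (1 − cos 2θ₀ cos 2θ₁)/2)` and off-diagonal entries
`g₀₂ = g₂₀ = cos θ₁ sin θ₁`, `g₁₂ = g₂₁ = −cos θ₀ sin θ₀`, `g₀₁ = g₁₀ = 0`. -/
theorem stmt14 (θ : Fin 3 → ℝ) :
    fsMetric14 0 0 θ = 1 ∧ fsMetric14 1 1 θ = 1 ∧
    fsMetric14 2 2 θ = (1 - Real.cos (2 * θ 0) * Real.cos (2 * θ 1)) / 2 ∧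
    fsMetric14 0 2 θ = Real.cos (θ 1) * Real.sin (θ 1) ∧
    fsMetric14 2 0 θ = Real.cos (θ 1) * Real.sin (θ 1) ∧
    fsMetric14 1 2 θ = -(Real.cos (θ 0) * Real.sin (θ 0)) ∧
    fsMetric14 2 1 θ = -(Real.cos (θ 0) * Real.sin (θ 0)) ∧
    fsMetric14 0 1 θ = 0 ∧ fsMetric14 1 0 θ = 0 := by
  have p0 := sin_sq_add_cos_sq (θ 0)
  have p1 := sin_sq_add_cos_sq (θ 1)
  have p2 := sin_sq_add_cos_sq (θ 2)
  rw [fsMetric14_comm 2 0, fsMetric14_comm 2 1, fsMetric14_comm 1 0, cos_two_mul, cos_two_mul]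
  simp only [fsMetric14_eq_sum, dpsi14_zero, dpsi14_one, dpsi14_two, Fin.sum_univ_four,
    Matrix.cons_val_zero, Matrix.cons_val_one, Matrix.cons_val]
  grind
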